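/- arXiv:math/0505031 — 4 statements merged into one kernel-verified Lean document; each statement's English description precedes it below -/
import Mathlib

section
/- For any permutation σ of [n] with exactly k weak exceedances (indices i with σ(i) ≥ i), the number of crossings plus the number of alignments of σ equals (k−1)(n−k). -/
/-!
Let `W` be the weak exceedances of `σ` and `E` the other indices. A crossing or alignment of two
elements of `W` is exactly a pair `j < i ≤ σ j`, one of two elements of `E` a pair
`σ j < i < j`, and the mixed alignments together with the pairs `(i, j) ∈ E × W` with `j < i`,
`σ i < σ j` partition `E × W`. Since a permutation moves as many points out of `{j | j < t}` as
into it, the first two counts plus `|E|` add up to `∑ (i - σ i)`; comparing inversions shows the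
last count is `∑ (i - σ i)` as well. Hence crossings plus alignments number
`|E| |W| - |E| = (n - k)(k - 1)`.
-/

open Finset

theorem Finset.card_filter_add_card_filter_of_iff {α : Type*} {s : Finset α}
    {p q r : α → Prop} [DecidablePred p] [DecidablePred q] [DecidablePred r]
    (hr : ∀ x ∈ s, r x ↔ p x ∨ q x) (hpq : ∀ x ∈ s, p x → ¬ q x) :
    #{x ∈ s | p x} + #{x ∈ s | q x} = #{x ∈ s | r x} := by
  classical
  rw [← card_union_of_disjoint (disjoint_filter.2 hpq), ← filter_or, filter_congr hr]

theorem Finset.card_filter_prod_eq_sum {α β : Type*} [Fintype α] [Fintype β]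
    (P : α × β → Prop) [DecidablePred P] :
    #{p | P p} = ∑ a, #{b | P (a, b)} := by
  simp only [card_filter, Fintype.sum_prod_type]

namespace Equiv.Perm

section
variable {α : Type*} [Fintype α]

theorem card_filter_and_not_add_card_filter (σ : Perm α) (p q : α → Prop)
    [DecidablePred p] [DecidablePred q] :
    #{j | p j ∧ ¬ q (σ j)} + #{j | q j} = #{j | p j} + #{j | ¬ p j ∧ q (σ j)} := by
  have hp : #{j | p j ∧ q (σ j)} + #{j | p j ∧ ¬ q (σ j)} = #{j | p j} :=
    card_filter_add_card_filter_of_iff (fun j _ => by tauto) (fun j _ => by tauto)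
  have hq : #{j | p j ∧ q (σ j)} + #{j | ¬ p j ∧ q (σ j)} = #{j | q j} :=
    (card_filter_add_card_filter_of_iff (r := fun j => q (σ j)) (fun j _ => by tauto)
      (fun j _ => by tauto)).trans (card_equiv σ (by simp))
  omega

variable [LinearOrder α]

theorem card_filter_lt_and_le_apply (σ : Perm α) (t : α) :
    #{j | j < t ∧ t ≤ σ j} = #{j | σ j < t ∧ t ≤ j} := by
  have h := σ.card_filter_and_not_add_card_filter (· < t) (· < t)
  simp only [not_lt] at h
  rw [show #{j | σ j < t ∧ t ≤ j} = #{j | t ≤ j ∧ σ j < t} by simp only [and_comm]]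
  omega

theorem card_filter_lt_and_apply_lt_add (σ : Perm α) (i : α) :
    #{j | j < i ∧ σ i < σ j} + #{t | t < σ i} = #{t | t < i} + #{j | i < j ∧ σ j < σ i} := by
  have h := σ.card_filter_and_not_add_card_filter (· < i) (· < σ i)
  have hl : #{j | j < i ∧ ¬ σ j < σ i} = #{j | j < i ∧ σ i < σ j} :=
    congrArg card <| filter_congr fun j _ =>
      and_congr_right fun hj => not_lt.trans (σ.injective.ne hj.ne).symm.le_iff_lt
  have hr : #{j | ¬ j < i ∧ σ j < σ i} = #{j | i < j ∧ σ j < σ i} :=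
    congrArg card <| filter_congr fun j _ =>
      ⟨fun ⟨hj, hσ⟩ => ⟨lt_of_le_of_ne (not_lt.1 hj) fun h => hσ.ne (congrArg σ h.symm), hσ⟩,
        fun ⟨hj, hσ⟩ => ⟨hj.not_gt, hσ⟩⟩
  rwa [hl, hr] at h

end

section
variable {n : ℕ} (σ : Perm (Fin n))

theorem card_crossing_add_card_alignment_of_weakExc :
    #{p : Fin n × Fin n | p.2 < p.1 ∧ p.1 ≤ σ p.2 ∧ σ p.2 < σ p.1} +
      #{p : Fin n × Fin n | p.2 < p.1 ∧ p.1 ≤ σ p.1 ∧ σ p.1 < σ p.2} =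
    #{p : Fin n × Fin n | p.2 < p.1 ∧ p.1 ≤ σ p.2 ∧ p.1 ≤ σ p.1} :=
  card_filter_add_card_filter_of_iff
    (fun p _ => by have := σ.injective.ne_iff (x := p.1) (y := p.2); omega)
    (fun p _ => by omega)

theorem card_crossing_add_card_alignment_of_not_weakExc :
    #{p : Fin n × Fin n | p.1 < p.2 ∧ σ p.2 < p.1 ∧ σ p.1 < σ p.2} +
      #{p : Fin n × Fin n | p.1 < p.2 ∧ σ p.1 < p.1 ∧ σ p.2 < σ p.1} =
    #{p : Fin n × Fin n | p.1 < p.2 ∧ σ p.2 < p.1 ∧ σ p.1 < p.1} :=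
  card_filter_add_card_filter_of_iff
    (fun p _ => by have := σ.injective.ne_iff (x := p.1) (y := p.2); omega)
    (fun p _ => by omega)

theorem card_alignment_mixed_add_card_eq_mul :
    (#{p : Fin n × Fin n | p.2 ≤ σ p.2 ∧ σ p.2 < σ p.1 ∧ σ p.1 < p.1} +
      #{p : Fin n × Fin n | σ p.1 < p.1 ∧ p.1 < p.2 ∧ p.2 ≤ σ p.2}) +
      #{p : Fin n × Fin n | σ p.1 < p.1 ∧ p.2 ≤ σ p.2 ∧ p.2 < p.1 ∧ σ p.1 < σ p.2} =
    #{i | σ i < i} * #{i | i ≤ σ i} := calc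
  _ = #{p : Fin n × Fin n | σ p.1 < p.1 ∧ p.2 ≤ σ p.2 ∧ (σ p.2 < σ p.1 ∨ p.1 < p.2)} +
      #{p : Fin n × Fin n | σ p.1 < p.1 ∧ p.2 ≤ σ p.2 ∧ p.2 < p.1 ∧ σ p.1 < σ p.2} := by
    congr 1
    exact card_filter_add_card_filter_of_iff (fun p _ => by omega) (fun p _ => by omega)
  _ = #{p : Fin n × Fin n | σ p.1 < p.1 ∧ p.2 ≤ σ p.2} :=
    card_filter_add_card_filter_of_iff
      (fun p _ => by have := σ.injective.ne_iff (x := p.1) (y := p.2); omega)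
      (fun p _ => by omega)
  _ = #{i | σ i < i} * #{i | i ≤ σ i} := by
    rw [← card_product, ← filter_product, univ_product_univ]

theorem card_cover_row (i : Fin n) :
    #{j | j < i ∧ i ≤ σ j ∧ i ≤ σ i} + #{j | i < j ∧ σ j < i ∧ σ i < i} +
      (if σ i < i then 1 else 0) = #{j | σ j < i ∧ i ≤ j} := by
  by_cases hi : σ i < i
  · have hU : #{j | j < i ∧ i ≤ σ j ∧ i ≤ σ i} = 0 :=
      card_eq_zero.2 <| filter_eq_empty_iff.2 fun j _ => by omega
    have hV : #{j | i < j ∧ σ j < i ∧ σ i < i} + #{j | j = i} = #{j | σ j < i ∧ i ≤ j} :=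
      card_filter_add_card_filter_of_iff
        (fun j _ => by constructor <;> [omega; rintro (h | rfl) <;> omega])
        (fun j _ => by omega)
    rw [hU, if_pos hi, zero_add, ← hV, filter_eq' univ i, if_pos (mem_univ i), card_singleton]
  · have hV : #{j | i < j ∧ σ j < i ∧ σ i < i} = 0 :=
      card_eq_zero.2 <| filter_eq_empty_iff.2 fun j _ => by omega
    rw [hV, if_neg hi, add_zero, add_zero, ← card_filter_lt_and_le_apply]
    exact congrArg card <| filter_congr fun j _ => by omega

theorem card_cover_add_card_cover_add_card_eq_sum_sub :
    #{p : Fin n × Fin n | p.2 < p.1 ∧ p.1 ≤ σ p.2 ∧ p.1 ≤ σ p.1} +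
      #{p : Fin n × Fin n | p.1 < p.2 ∧ σ p.2 < p.1 ∧ σ p.1 < p.1} + #{i | σ i < i} =
    ∑ i : Fin n, ((i : ℕ) - (σ i : ℕ)) := by
  calc _ = ∑ i, #{j | σ j < i ∧ i ≤ j} := by
        simp only [card_filter_prod_eq_sum, card_filter (fun i => σ i < i), ← sum_add_distrib,
          card_cover_row]
    _ = ∑ j, #{i | σ j < i ∧ i ≤ j} := by
        simp only [card_filter]
        exact sum_comm
    _ = ∑ i : Fin n, ((i : ℕ) - (σ i : ℕ)) := by
        refine sum_congr rfl fun j _ => ?_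
        rw [← Fin.card_Ioc]
        congr 1; ext i; simp

theorem card_mixed_inversion_row (i : Fin n) :
    #{j | σ i < i ∧ j ≤ σ j ∧ j < i ∧ σ i < σ j} + #{j | σ i < i ∧ σ j < j ∧ j < i ∧ σ i < σ j} =
      ((i : ℕ) - (σ i : ℕ)) + #{j | σ i < i ∧ i < j ∧ σ j < σ i} := by
  by_cases hi : σ i < i
  · have hsplit : #{j | σ i < i ∧ j ≤ σ j ∧ j < i ∧ σ i < σ j} +
        #{j | σ i < i ∧ σ j < j ∧ j < i ∧ σ i < σ j} = #{j | j < i ∧ σ i < σ j} :=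
      card_filter_add_card_filter_of_iff (fun j _ => by omega) (fun j _ => by omega)
    have hinv := σ.card_filter_lt_and_apply_lt_add i
    simp only [filter_gt_eq_Iio, Fin.card_Iio] at hinv
    have hX : #{j | σ i < i ∧ i < j ∧ σ j < σ i} = #{j | i < j ∧ σ j < σ i} := by
      simp only [hi, true_and]
    omega
  · simp only [hi, false_and, filter_false, card_empty]
    omega

theorem card_mixed_inversion_eq_sum_sub :
    #{p : Fin n × Fin n | σ p.1 < p.1 ∧ p.2 ≤ σ p.2 ∧ p.2 < p.1 ∧ σ p.1 < σ p.2} =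
    ∑ i : Fin n, ((i : ℕ) - (σ i : ℕ)) := by
  have hrows := sum_congr rfl fun i (_ : i ∈ univ) => σ.card_mixed_inversion_row i
  simp only [sum_add_distrib] at hrows
  -- inversions between two non-weak exceedances, seen from either end
  have hswap : #{p : Fin n × Fin n | σ p.1 < p.1 ∧ p.1 < p.2 ∧ σ p.2 < σ p.1} =
      #{p : Fin n × Fin n | σ p.1 < p.1 ∧ σ p.2 < p.2 ∧ p.2 < p.1 ∧ σ p.1 < σ p.2} :=
    card_equiv (Equiv.prodComm _ _) fun p => by simp only [mem_filter, mem_univ, true_and,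
      Equiv.prodComm_apply, Prod.fst_swap, Prod.snd_swap]; omega
  simp only [card_filter_prod_eq_sum] at hswap ⊢
  omega

end

end Equiv.Perm

/-- For a permutation σ of [n] with exactly k weak exceedances, the number of
crossings plus the number of alignments equals (k−1)(n−k). Pairs p = (i, j). -/
theorem stmt3 (n k : ℕ) (σ : Equiv.Perm (Fin n))
    (hk : (univ.filter fun i : Fin n => i ≤ σ i).card = k) :
    -- crossings: C₊(σ) + C₋(σ)
    ((univ.filter fun p : Fin n × Fin n =>
        p.2 < p.1 ∧ p.1 ≤ σ p.2 ∧ σ p.2 < σ p.1).card +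
      (univ.filter fun p : Fin n × Fin n =>
        p.1 < p.2 ∧ σ p.2 < p.1 ∧ σ p.1 < σ p.2).card) +
    -- alignments: A₊(σ) + A₋(σ) + A₊₋(σ)
    ((univ.filter fun p : Fin n × Fin n =>
        p.2 < p.1 ∧ p.1 ≤ σ p.1 ∧ σ p.1 < σ p.2).card +
      (univ.filter fun p : Fin n × Fin n =>
        p.1 < p.2 ∧ σ p.1 < p.1 ∧ σ p.2 < σ p.1).card +
      ((univ.filter fun p : Fin n × Fin n =>
          p.2 ≤ σ p.2 ∧ σ p.2 < σ p.1 ∧ σ p.1 < p.1).card +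
        (univ.filter fun p : Fin n × Fin n =>
          σ p.1 < p.1 ∧ p.1 < p.2 ∧ p.2 ≤ σ p.2).card)) =
    (k - 1) * (n - k) := by
  have hE : #{i : Fin n | σ i < i} = n - k := by
    have := card_filter_add_card_filter_not (s := univ) fun i : Fin n => i ≤ σ i
    simp only [not_le, card_univ, Fintype.card_fin] at this
    omega
  have hW := σ.card_crossing_add_card_alignment_of_weakExc
  have hNW := σ.card_crossing_add_card_alignment_of_not_weakExc
  have hmixed := σ.card_alignment_mixed_add_card_eq_mul
  have hcover := σ.card_cover_add_card_cover_add_card_eq_sum_sub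
  have hinv := σ.card_mixed_inversion_eq_sum_sub
  rw [hE, hk] at hmixed
  rw [hE] at hcover
  rw [Nat.sub_one_mul, mul_comm]
  omega
end

section
/- For every permutation σ of [n], Σ_{i : i > σ(i)} (h_i − 1) = A₋(σ) + C₋(σ), where h_i = |{j < i : σ(j) ≥ i}|; equivalently, if k is the number of weak exceedances of σ, A₋(σ) + C₋(σ) = k − n + Σ_{i > σ(i)} |B₊(i)| with B₊(i) = {j : j < i ≤ σ(j)}. -/
open Finset

/-- Per-index key lemma: for i with σ i < i,
|{j : j < i ≤ σ j}| = |{j : i < j, σ j < i}| + 1. -/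
lemma stmt8_key {n : ℕ} (σ : Equiv.Perm (Fin n)) (i : Fin n) (hi : σ i < i) :
    (univ.filter fun j : Fin n => j < i ∧ i ≤ σ j).card
      = (univ.filter fun j : Fin n => i < j ∧ σ j < i).card + 1 := by
  classical
  have himg : (univ.filter fun j : Fin n => σ j < i)
      = (univ.filter fun j : Fin n => j < i).image σ.symm := by
    ext j
    simp only [mem_filter, mem_univ, true_and, mem_image]
    constructor
    · intro h; exact ⟨σ j, h, σ.symm_apply_apply j⟩
    · rintro ⟨a, ha, rfl⟩; simpa using ha
  have hcard : (univ.filter fun j : Fin n => σ j < i).card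
      = (univ.filter fun j : Fin n => j < i).card := by
    rw [himg, card_image_of_injective _ σ.symm.injective]
  have s1 : (univ.filter fun j : Fin n => j < i ∧ σ j < i).card
      + (univ.filter fun j : Fin n => j < i ∧ i ≤ σ j).card
      = (univ.filter fun j : Fin n => j < i).card := by
    have := Finset.card_filter_add_card_filter_not
      (s := univ.filter fun j : Fin n => j < i) (p := fun j => σ j < i)
    simpa [Finset.filter_filter, not_lt] using this
  have s2 : (univ.filter fun j : Fin n => j < i ∧ σ j < i).card
      + (univ.filter fun j : Fin n => i ≤ j ∧ σ j < i).card
      = (univ.filter fun j : Fin n => σ j < i).card := by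
    have := Finset.card_filter_add_card_filter_not
      (s := univ.filter fun j : Fin n => σ j < i) (p := fun j => j < i)
    simpa [Finset.filter_filter, not_lt, and_comm] using this
  have hins : (univ.filter fun j : Fin n => i ≤ j ∧ σ j < i)
      = insert i (univ.filter fun j : Fin n => i < j ∧ σ j < i) := by
    ext j
    simp only [mem_filter, mem_univ, true_and, mem_insert]
    constructor
    · rintro ⟨h1, h2⟩
      rcases eq_or_lt_of_le h1 with h | h
      · exact Or.inl h.symm
      · exact Or.inr ⟨h, h2⟩
    · rintro (rfl | ⟨h1, h2⟩)
      · exact ⟨le_refl _, hi⟩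
      · exact ⟨le_of_lt h1, h2⟩
  have hnm : i ∉ (univ.filter fun j : Fin n => i < j ∧ σ j < i) := by
    simp
  have hins' : (univ.filter fun j : Fin n => i ≤ j ∧ σ j < i).card
      = (univ.filter fun j : Fin n => i < j ∧ σ j < i).card + 1 := by
    rw [hins, card_insert_of_notMem hnm]
  omega

/-- For a permutation σ of [n] with k weak exceedances:
A₋(σ) + C₋(σ) = k − n + Σ_{i > σ(i)} |B₊(i)|, where B₊(i) = {j : j < i ≤ σ(j)}.
Pairs p = (i, j); the identity is stated in ℤ. -/
theorem stmt8 (n k : ℕ) (σ : Equiv.Perm (Fin n))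
    (hk : (univ.filter fun i : Fin n => i ≤ σ i).card = k) :
    ((univ.filter fun p : Fin n × Fin n =>
        p.1 < p.2 ∧ σ p.1 < p.1 ∧ σ p.2 < σ p.1).card : ℤ) +
      ((univ.filter fun p : Fin n × Fin n =>
        p.1 < p.2 ∧ σ p.2 < p.1 ∧ σ p.1 < σ p.2).card : ℤ) =
    (k : ℤ) - (n : ℤ) +
      ∑ i ∈ univ.filter (fun i : Fin n => σ i < i),
        ((univ.filter fun j : Fin n => j < i ∧ i ≤ σ j).card : ℤ) := by
  classical
  set T := univ.filter fun p : Fin n × Fin n => σ p.1 < p.1 ∧ p.1 < p.2 ∧ σ p.2 < p.1 with hTdef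
  -- A = T.filter (σ p.2 < σ p.1), C = T.filter ¬(σ p.2 < σ p.1)
  have hA : (univ.filter fun p : Fin n × Fin n =>
      p.1 < p.2 ∧ σ p.1 < p.1 ∧ σ p.2 < σ p.1)
      = T.filter fun p => σ p.2 < σ p.1 := by
    rw [hTdef, Finset.filter_filter]
    apply Finset.filter_congr
    intro p _
    constructor
    · rintro ⟨h1, h2, h3⟩; exact ⟨⟨h2, h1, h3.trans h2⟩, h3⟩
    · rintro ⟨⟨h2, h1, _⟩, h3⟩; exact ⟨h1, h2, h3⟩
  have hC : (univ.filter fun p : Fin n × Fin n =>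
      p.1 < p.2 ∧ σ p.2 < p.1 ∧ σ p.1 < σ p.2)
      = T.filter fun p => ¬ σ p.2 < σ p.1 := by
    rw [hTdef, Finset.filter_filter]
    apply Finset.filter_congr
    intro p _
    constructor
    · rintro ⟨h1, h2, h3⟩; exact ⟨⟨h3.trans h2, h1, h2⟩, asymm h3⟩
    · rintro ⟨⟨h2, h1, h4⟩, h3⟩
      have hne : σ p.1 ≠ σ p.2 := fun h => absurd (σ.injective h) (ne_of_lt h1)
      exact ⟨h1, h4, lt_of_le_of_ne (not_lt.mp h3) hne⟩
  have hAC : (univ.filter fun p : Fin n × Fin n =>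
        p.1 < p.2 ∧ σ p.1 < p.1 ∧ σ p.2 < σ p.1).card
      + (univ.filter fun p : Fin n × Fin n =>
        p.1 < p.2 ∧ σ p.2 < p.1 ∧ σ p.1 < σ p.2).card = T.card := by
    rw [hA, hC]
    exact Finset.card_filter_add_card_filter_not _
  -- T.card as a sum
  have hT : T.card = ∑ i ∈ univ.filter (fun i : Fin n => σ i < i),
      (univ.filter fun j : Fin n => i < j ∧ σ j < i).card := by
    rw [hTdef, Finset.card_filter, ← Finset.univ_product_univ, Finset.sum_product,
      Finset.sum_filter]
    apply Finset.sum_congr rfl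
    intro i _
    by_cases h : σ i < i
    · rw [if_pos h, Finset.card_filter]
      apply Finset.sum_congr rfl
      intro j _
      simp [h]
    · rw [if_neg h]
      apply Finset.sum_eq_zero
      intro j _
      simp [h]
  -- n = k + m
  have hm : k + (univ.filter fun i : Fin n => σ i < i).card = n := by
    have := Finset.card_filter_add_card_filter_not
      (s := (univ : Finset (Fin n))) (p := fun i : Fin n => i ≤ σ i)
    simp only [not_le, Finset.card_univ, Fintype.card_fin] at this
    rw [← hk]; exact this
  -- sum with key lemma
  have hsum : ∑ i ∈ univ.filter (fun i : Fin n => σ i < i),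
      ((univ.filter fun j : Fin n => j < i ∧ i ≤ σ j).card : ℤ)
      = ∑ i ∈ univ.filter (fun i : Fin n => σ i < i),
        (((univ.filter fun j : Fin n => i < j ∧ σ j < i).card : ℤ) + 1) := by
    apply Finset.sum_congr rfl
    intro i hi
    rw [Finset.mem_filter] at hi
    rw [stmt8_key σ i hi.2]
    push_cast
    ring
  rw [hsum, Finset.sum_add_distrib, Finset.sum_const, nsmul_eq_mul, mul_one]
  have hTZ : ((univ.filter fun p : Fin n × Fin n =>
        p.1 < p.2 ∧ σ p.1 < p.1 ∧ σ p.2 < σ p.1).card : ℤ)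
      + ((univ.filter fun p : Fin n × Fin n =>
        p.1 < p.2 ∧ σ p.2 < p.1 ∧ σ p.1 < σ p.2).card : ℤ)
      = (T.card : ℤ) := by exact_mod_cast congrArg (Nat.cast : ℕ → ℤ) hAC
  have hTZ2 : (T.card : ℤ) = ∑ i ∈ univ.filter (fun i : Fin n => σ i < i),
      ((univ.filter fun j : Fin n => i < j ∧ σ j < i).card : ℤ) := by
    rw [hT]; push_cast; ring
  have hmZ : (k : ℤ) + ((univ.filter fun i : Fin n => σ i < i).card : ℤ) = n := by
    exact_mod_cast hm
  rw [hTZ, hTZ2]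
  linarith
end

section
/- For any decorated permutation σ of [n] (a permutation with fixed points colored + or −) with k weak exceedances, the sum of alignments, crossings, and the number of strict descedances satisfies A₊(σ) + A₋(σ) + C₊(σ) + C₋(σ) + A₊₋(σ) + |{j : j > σ(j)}| = (n−k)k. -/
open Finset

/-- In a decorated permutation (σ, col), i ≤₊ σ(i) means i < σ(i), or i is a
fixed point colored `+` (true). -/
def lePlus (n : ℕ) (σ : Equiv.Perm (Fin n)) (col : Fin n → Bool) (i : Fin n) : Prop :=
  i < σ i ∨ (σ i = i ∧ col i = true)

/-- In a decorated permutation (σ, col), i ≥₋ σ(i) means i > σ(i), or i is a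
fixed point colored `−` (false). -/
def geMinus (n : ℕ) (σ : Equiv.Perm (Fin n)) (col : Fin n → Bool) (i : Fin n) : Prop :=
  σ i < i ∨ (σ i = i ∧ col i = false)

instance (n : ℕ) (σ : Equiv.Perm (Fin n)) (col : Fin n → Bool) :
    DecidablePred (lePlus n σ col) := fun i => by unfold lePlus; infer_instance

instance (n : ℕ) (σ : Equiv.Perm (Fin n)) (col : Fin n → Bool) :
    DecidablePred (geMinus n σ col) := fun i => by unfold geMinus; infer_instance

namespace Stmt15Aux

variable {n : ℕ}

lemma card_filter_lt' (a : Fin n) :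
    (univ.filter fun b : Fin n => b < a).card = (a : ℕ) := by
  rw [show (univ.filter fun b : Fin n => b < a) = Finset.Iio a by ext b; simp]
  simp

lemma card_filter_perm_lt' (σ : Equiv.Perm (Fin n)) (a : Fin n) :
    (univ.filter fun b : Fin n => σ b < a).card = (a : ℕ) := by
  rw [← card_filter_lt' a]
  apply Finset.card_bij (fun b _ => σ b)
  · intro b hb; simp only [mem_filter, mem_univ, true_and] at hb ⊢; exact hb
  · intro b hb c hc h; exact σ.injective h
  · intro v hv; simp only [mem_filter, mem_univ, true_and] at hv
    exact ⟨σ.symm v, by simp [hv], by simp⟩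

lemma csplit {α : Type*} [Fintype α] (P Q : α → Prop) [DecidablePred P] [DecidablePred Q] :
    (univ.filter P).card
      = (univ.filter fun x => P x ∧ Q x).card + (univ.filter fun x => P x ∧ ¬ Q x).card := by
  rw [← Finset.card_filter_add_card_filter_not (s := univ.filter P) (p := Q),
    Finset.filter_filter, Finset.filter_filter]

lemma balance (σ : Equiv.Perm (Fin n)) (a : Fin n) :
    (univ.filter fun b => b < a ∧ a ≤ σ b).card
      = (univ.filter fun b => σ b < a ∧ a ≤ b).card := by
  have h1 := card_filter_lt' (n := n) a
  have h2 := card_filter_perm_lt' σ a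
  have h3 := csplit (fun b : Fin n => b < a) (fun b => a ≤ σ b)
  have h4 := csplit (fun b : Fin n => σ b < a) (fun b => a ≤ b)
  have h5 : (univ.filter fun b : Fin n => b < a ∧ ¬ a ≤ σ b).card
      = (univ.filter fun b : Fin n => σ b < a ∧ ¬ a ≤ b).card := by
    congr 1
    apply Finset.filter_congr
    intro b _
    simp only [not_le]
    tauto
  omega

lemma fiberSnd (P : Fin n → Fin n → Prop) [∀ a b, Decidable (P a b)] :
    (univ.filter fun p : Fin n × Fin n => P p.1 p.2).card
      = ∑ a : Fin n, (univ.filter fun b => P b a).card := by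
  rw [Finset.card_eq_sum_card_fiberwise (f := Prod.snd) (t := univ) (fun x _ => mem_univ _)]
  refine Finset.sum_congr rfl fun a _ => ?_
  rw [Finset.filter_filter]
  apply Finset.card_bij (fun p _ => p.1)
  · intro p hp; simp only [mem_filter, mem_univ, true_and] at hp ⊢
    rcases hp with ⟨h1, h2⟩; rwa [h2] at h1
  · intro p hp q hq h
    simp only [mem_filter, mem_univ, true_and] at hp hq
    exact Prod.ext h (hp.2.trans hq.2.symm)
  · intro b hb; simp only [mem_filter, mem_univ, true_and] at hb
    exact ⟨(b, a), by simp [hb], rfl⟩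

lemma fiberFst (P : Fin n → Fin n → Prop) [∀ a b, Decidable (P a b)] :
    (univ.filter fun p : Fin n × Fin n => P p.1 p.2).card
      = ∑ b : Fin n, (univ.filter fun t => P b t).card := by
  rw [Finset.card_eq_sum_card_fiberwise (f := Prod.fst) (t := univ) (fun x _ => mem_univ _)]
  refine Finset.sum_congr rfl fun b _ => ?_
  rw [Finset.filter_filter]
  apply Finset.card_bij (fun p _ => p.2)
  · intro p hp; simp only [mem_filter, mem_univ, true_and] at hp ⊢
    rcases hp with ⟨h1, h2⟩; rwa [h2] at h1
  · intro p hp q hq h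
    simp only [mem_filter, mem_univ, true_and] at hp hq
    exact Prod.ext (hp.2.trans hq.2.symm) h
  · intro t ht; simp only [mem_filter, mem_univ, true_and] at ht
    exact ⟨(b, t), by simp [ht], rfl⟩

lemma cswap (R : Fin n → Fin n → Prop) [∀ a b, Decidable (R a b)] :
    (univ.filter fun p : Fin n × Fin n => R p.1 p.2).card
      = (univ.filter fun p : Fin n × Fin n => R p.2 p.1).card := by
  apply Finset.card_bij' (fun p _ => (p.2, p.1)) (fun p _ => (p.2, p.1)) <;>
    simp

lemma sortbij (σ : Equiv.Perm (Fin n)) (G : Fin n → Fin n → Prop) [∀ a b, Decidable (G a b)]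
    (hsym : ∀ a b, G a b → G b a) :
    (univ.filter fun p : Fin n × Fin n => G p.1 p.2 ∧ p.1 < p.2).card
      = (univ.filter fun p : Fin n × Fin n => G p.1 p.2 ∧ σ p.1 < σ p.2).card := by
  apply Finset.card_bij' (fun p _ => if σ p.1 < σ p.2 then p else (p.2, p.1))
    (fun q _ => if q.1 < q.2 then q else (q.2, q.1))
  · intro p hp
    simp only [mem_filter, mem_univ, true_and] at hp ⊢
    obtain ⟨hG, hlt⟩ := hp
    have hne : σ p.1 ≠ σ p.2 := fun h => absurd (σ.injective h) hlt.ne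
    split_ifs with h
    · exact ⟨hG, h⟩
    · exact ⟨hsym _ _ hG, lt_of_le_of_ne (not_lt.mp h) hne.symm⟩
  · intro q hq
    simp only [mem_filter, mem_univ, true_and] at hq ⊢
    obtain ⟨hG, hlt⟩ := hq
    have hne : q.1 ≠ q.2 := fun h => absurd (congrArg σ h) hlt.ne
    split_ifs with h
    · exact ⟨hG, h⟩
    · exact ⟨hsym _ _ hG, lt_of_le_of_ne (not_lt.mp h) hne.symm⟩
  · intro p hp
    simp only [mem_filter, mem_univ, true_and] at hp
    by_cases h : σ p.1 < σ p.2
    · simp [h, hp.2]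
    · simp [h, lt_asymm hp.2]
  · intro q hq
    simp only [mem_filter, mem_univ, true_and] at hq
    by_cases h : q.1 < q.2
    · simp [h, hq.2]
    · simp [h, lt_asymm hq.2]

variable {σ : Equiv.Perm (Fin n)} {col : Fin n → Bool}

lemma gm_iff (i : Fin n) : geMinus n σ col i ↔ ¬ lePlus n σ col i := by
  unfold lePlus geMinus
  rw [Fin.lt_def, Fin.lt_def, Fin.ext_iff]
  cases hc : col i <;> simp [hc] <;> omega

lemma lp_le (i : Fin n) (h : lePlus n σ col i) : i ≤ σ i := by
  rcases h with h | h
  · exact h.le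
  · exact h.1.ge

lemma gm_le (i : Fin n) (h : geMinus n σ col i) : σ i ≤ i := by
  rcases h with h | h
  · exact h.le
  · exact h.1.le

end Stmt15Aux

open Stmt15Aux

section Main

variable (n : ℕ) (σ : Equiv.Perm (Fin n)) (col : Fin n → Bool)

/-- Decomposition of the incidence set I = {(b,t) : b < t ≤ σ b}. -/
lemma I_split :
    (univ.filter fun p : Fin n × Fin n => p.1 < p.2 ∧ p.2 ≤ σ p.1).card
      = (univ.filter fun p : Fin n × Fin n =>
            p.1 < p.2 ∧ p.2 ≤ σ p.1 ∧ σ p.1 < σ p.2).card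
      + (univ.filter fun p : Fin n × Fin n =>
            p.2 < p.1 ∧ lePlus n σ col p.1 ∧ σ p.1 < σ p.2).card
      + (univ.filter fun p : Fin n × Fin n =>
            geMinus n σ col p.2 ∧ p.1 < p.2 ∧ p.2 ≤ σ p.1).card := by
  have h1 := csplit (fun p : Fin n × Fin n => p.1 < p.2 ∧ p.2 ≤ σ p.1)
    (fun p => σ p.1 < σ p.2)
  have h2 := csplit (fun p : Fin n × Fin n => (p.1 < p.2 ∧ p.2 ≤ σ p.1) ∧ ¬ σ p.1 < σ p.2)
    (fun p => lePlus n σ col p.2)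
  have e1 : (univ.filter fun p : Fin n × Fin n =>
        (p.1 < p.2 ∧ p.2 ≤ σ p.1) ∧ σ p.1 < σ p.2).card
      = (univ.filter fun p : Fin n × Fin n =>
            p.1 < p.2 ∧ p.2 ≤ σ p.1 ∧ σ p.1 < σ p.2).card := by
    congr 1; apply Finset.filter_congr; intro p _; tauto
  have e2 : (univ.filter fun p : Fin n × Fin n =>
        ((p.1 < p.2 ∧ p.2 ≤ σ p.1) ∧ ¬ σ p.1 < σ p.2) ∧ lePlus n σ col p.2).card
      = (univ.filter fun p : Fin n × Fin n =>
            p.2 < p.1 ∧ lePlus n σ col p.1 ∧ σ p.1 < σ p.2).card := by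
    rw [cswap (fun a b : Fin n => b < a ∧ lePlus n σ col a ∧ σ a < σ b)]
    congr 1; apply Finset.filter_congr; intro p _
    constructor
    · rintro ⟨⟨⟨hlt, _⟩, hns⟩, hL⟩
      have hne : σ p.1 ≠ σ p.2 := fun h => hlt.ne (σ.injective h)
      exact ⟨hlt, hL, lt_of_le_of_ne (not_lt.mp hns) hne.symm⟩
    · rintro ⟨hlt, hL, hgt⟩
      exact ⟨⟨⟨hlt, le_trans (lp_le p.2 hL) hgt.le⟩, lt_asymm hgt⟩, hL⟩
  have e3 : (univ.filter fun p : Fin n × Fin n =>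
        ((p.1 < p.2 ∧ p.2 ≤ σ p.1) ∧ ¬ σ p.1 < σ p.2) ∧ ¬ lePlus n σ col p.2).card
      = (univ.filter fun p : Fin n × Fin n =>
            geMinus n σ col p.2 ∧ p.1 < p.2 ∧ p.2 ≤ σ p.1).card := by
    congr 1; apply Finset.filter_congr; intro p _
    constructor
    · rintro ⟨⟨⟨hlt, hle⟩, _⟩, hnL⟩
      exact ⟨(gm_iff p.2).mpr hnL, hlt, hle⟩
    · rintro ⟨hG, hlt, hle⟩
      exact ⟨⟨⟨hlt, hle⟩, not_lt.mpr (le_trans (gm_le p.2 hG) hle)⟩,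
        fun hL => (gm_iff p.2).mp hG hL⟩
  omega

/-- Balance: the middle set M matches M'. -/
lemma M_balance :
    (univ.filter fun p : Fin n × Fin n =>
        geMinus n σ col p.2 ∧ p.1 < p.2 ∧ p.2 ≤ σ p.1).card
      = (univ.filter fun p : Fin n × Fin n =>
            geMinus n σ col p.2 ∧ σ p.1 < p.2 ∧ p.2 ≤ p.1).card := by
  have h1 : (univ.filter fun p : Fin n × Fin n =>
        geMinus n σ col p.2 ∧ p.1 < p.2 ∧ p.2 ≤ σ p.1).card
      = ∑ a : Fin n, (univ.filter fun b : Fin n =>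
            geMinus n σ col a ∧ b < a ∧ a ≤ σ b).card :=
    fiberSnd (fun b a => geMinus n σ col a ∧ b < a ∧ a ≤ σ b)
  have h2 : (univ.filter fun p : Fin n × Fin n =>
        geMinus n σ col p.2 ∧ σ p.1 < p.2 ∧ p.2 ≤ p.1).card
      = ∑ a : Fin n, (univ.filter fun b : Fin n =>
            geMinus n σ col a ∧ σ b < a ∧ a ≤ b).card :=
    fiberSnd (fun b a => geMinus n σ col a ∧ σ b < a ∧ a ≤ b)
  rw [h1, h2]
  refine Finset.sum_congr rfl fun a _ => ?_
  by_cases ha : geMinus n σ col a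
  · simp only [ha, true_and]
    exact balance σ a
  · simp [ha]

/-- M' splits into strict descedances and the NN'' set. -/
lemma M'_split :
    (univ.filter fun p : Fin n × Fin n =>
        geMinus n σ col p.2 ∧ σ p.1 < p.2 ∧ p.2 ≤ p.1).card
      = (univ.filter fun j : Fin n => σ j < j).card
      + (univ.filter fun p : Fin n × Fin n =>
            geMinus n σ col p.2 ∧ σ p.1 < p.2 ∧ p.2 < p.1).card := by
  have h1 := csplit (fun p : Fin n × Fin n =>
      geMinus n σ col p.2 ∧ σ p.1 < p.2 ∧ p.2 ≤ p.1) (fun p => p.2 = p.1)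
  have e1 : (univ.filter fun p : Fin n × Fin n =>
        (geMinus n σ col p.2 ∧ σ p.1 < p.2 ∧ p.2 ≤ p.1) ∧ p.2 = p.1).card
      = (univ.filter fun j : Fin n => σ j < j).card := by
    apply Finset.card_bij (fun p _ => p.1)
    · intro p hp; simp only [mem_filter, mem_univ, true_and] at hp ⊢
      obtain ⟨⟨_, h2, _⟩, he⟩ := hp
      rwa [he] at h2
    · intro p hp q hq h
      simp only [mem_filter, mem_univ, true_and] at hp hq
      exact Prod.ext h (by rw [hp.2, hq.2, h])
    · intro j hj
      simp only [mem_filter, mem_univ, true_and] at hj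
      refine ⟨(j, j), ?_, rfl⟩
      simp only [mem_filter, mem_univ, true_and]
      exact ⟨⟨Or.inl hj, hj, le_refl _⟩, trivial⟩
  have e2 : (univ.filter fun p : Fin n × Fin n =>
        (geMinus n σ col p.2 ∧ σ p.1 < p.2 ∧ p.2 ≤ p.1) ∧ ¬ p.2 = p.1).card
      = (univ.filter fun p : Fin n × Fin n =>
            geMinus n σ col p.2 ∧ σ p.1 < p.2 ∧ p.2 < p.1).card := by
    congr 1; apply Finset.filter_congr; intro p _
    constructor
    · rintro ⟨⟨hG, h1, h2⟩, hne⟩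
      exact ⟨hG, h1, lt_of_le_of_ne h2 hne⟩
    · rintro ⟨hG, h1, h2⟩
      exact ⟨⟨hG, h1, h2.le⟩, h2.ne⟩
  omega

/-- NN'' equals (by swap) NN', which splits into A₋ and C₋. -/
lemma NN_split :
    (univ.filter fun p : Fin n × Fin n =>
        geMinus n σ col p.2 ∧ σ p.1 < p.2 ∧ p.2 < p.1).card
      = (univ.filter fun p : Fin n × Fin n =>
            p.1 < p.2 ∧ geMinus n σ col p.1 ∧ σ p.2 < σ p.1).card
      + (univ.filter fun p : Fin n × Fin n =>
            p.1 < p.2 ∧ σ p.2 < p.1 ∧ σ p.1 < σ p.2).card := by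
  rw [cswap (fun a b : Fin n => geMinus n σ col b ∧ σ a < b ∧ b < a)]
  have h1 := csplit (fun p : Fin n × Fin n =>
      geMinus n σ col p.1 ∧ σ p.2 < p.1 ∧ p.1 < p.2) (fun p => σ p.2 < σ p.1)
  have e1 : (univ.filter fun p : Fin n × Fin n =>
        (geMinus n σ col p.1 ∧ σ p.2 < p.1 ∧ p.1 < p.2) ∧ σ p.2 < σ p.1).card
      = (univ.filter fun p : Fin n × Fin n =>
            p.1 < p.2 ∧ geMinus n σ col p.1 ∧ σ p.2 < σ p.1).card := by
    congr 1; apply Finset.filter_congr; intro p _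
    constructor
    · rintro ⟨⟨hG, _, hlt⟩, hσ⟩
      exact ⟨hlt, hG, hσ⟩
    · rintro ⟨hlt, hG, hσ⟩
      exact ⟨⟨hG, lt_of_lt_of_le hσ (gm_le p.1 hG), hlt⟩, hσ⟩
  have e2 : (univ.filter fun p : Fin n × Fin n =>
        (geMinus n σ col p.1 ∧ σ p.2 < p.1 ∧ p.1 < p.2) ∧ ¬ σ p.2 < σ p.1).card
      = (univ.filter fun p : Fin n × Fin n =>
            p.1 < p.2 ∧ σ p.2 < p.1 ∧ σ p.1 < σ p.2).card := by
    congr 1; apply Finset.filter_congr; intro p _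
    constructor
    · rintro ⟨⟨_, h1, hlt⟩, hn⟩
      have hne : σ p.1 ≠ σ p.2 := fun h => hlt.ne (σ.injective h)
      exact ⟨hlt, h1, lt_of_le_of_ne (not_lt.mp hn) hne⟩
    · rintro ⟨hlt, h1, h2⟩
      exact ⟨⟨Or.inl (lt_trans h2 h1), h1, hlt⟩, lt_asymm h2⟩
  omega

end Main

section Main2

variable (n : ℕ) (σ : Equiv.Perm (Fin n)) (col : Fin n → Bool)

lemma perA (a : Fin n) (ha : geMinus n σ col a) :
    (a : ℕ) = (univ.filter fun b : Fin n =>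
          lePlus n σ col b ∧ b < a ∧ σ a < σ b).card
      + (univ.filter fun b : Fin n => geMinus n σ col b ∧ b < a).card
      + (univ.filter fun b : Fin n => lePlus n σ col b ∧ σ b < σ a).card := by
  have h0 := card_filter_lt' (n := n) a
  have h1 := csplit (fun b : Fin n => b < a) (fun b => lePlus n σ col b)
  have h2 := csplit (fun b : Fin n => b < a ∧ lePlus n σ col b) (fun b => σ a < σ b)
  have e1 : (univ.filter fun b : Fin n => (b < a ∧ lePlus n σ col b) ∧ σ a < σ b).card
      = (univ.filter fun b : Fin n => lePlus n σ col b ∧ b < a ∧ σ a < σ b).card := by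
    congr 1; apply Finset.filter_congr; intro b _; tauto
  have e2 : (univ.filter fun b : Fin n => (b < a ∧ lePlus n σ col b) ∧ ¬ σ a < σ b).card
      = (univ.filter fun b : Fin n => lePlus n σ col b ∧ σ b < σ a).card := by
    congr 1; apply Finset.filter_congr; intro b _
    constructor
    · rintro ⟨⟨hb, hL⟩, hn⟩
      exact ⟨hL, lt_of_le_of_ne (not_lt.mp hn) (fun h => hb.ne (σ.injective h))⟩
    · rintro ⟨hL, hσ⟩
      exact ⟨⟨lt_of_le_of_lt (lp_le b hL) (lt_of_lt_of_le hσ (gm_le a ha)), hL⟩,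
        lt_asymm hσ⟩
  have e3 : (univ.filter fun b : Fin n => b < a ∧ ¬ lePlus n σ col b).card
      = (univ.filter fun b : Fin n => geMinus n σ col b ∧ b < a).card := by
    congr 1; apply Finset.filter_congr; intro b _
    constructor
    · rintro ⟨hb, hnL⟩; exact ⟨(gm_iff b).mpr hnL, hb⟩
    · rintro ⟨hG, hb⟩; exact ⟨hb, (gm_iff b).mp hG⟩
  omega

lemma perA2 (a : Fin n) :
    ((σ a : Fin n) : ℕ) = (univ.filter fun b : Fin n =>
          lePlus n σ col b ∧ σ b < σ a).card
      + (univ.filter fun b : Fin n => geMinus n σ col b ∧ σ b < σ a).card := by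
  have h0 := card_filter_perm_lt' σ (σ a)
  have h1 := csplit (fun b : Fin n => σ b < σ a) (fun b => lePlus n σ col b)
  have e1 : (univ.filter fun b : Fin n => σ b < σ a ∧ lePlus n σ col b).card
      = (univ.filter fun b : Fin n => lePlus n σ col b ∧ σ b < σ a).card := by
    congr 1; apply Finset.filter_congr; intro b _; tauto
  have e2 : (univ.filter fun b : Fin n => σ b < σ a ∧ ¬ lePlus n σ col b).card
      = (univ.filter fun b : Fin n => geMinus n σ col b ∧ σ b < σ a).card := by
    congr 1; apply Finset.filter_congr; intro b _
    constructor
    · rintro ⟨hb, hnL⟩; exact ⟨(gm_iff b).mpr hnL, hb⟩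
    · rintro ⟨hG, hb⟩; exact ⟨hb, (gm_iff b).mp hG⟩
  omega

lemma E1 :
    ∑ a ∈ univ.filter (geMinus n σ col), (a : ℕ)
      = (univ.filter fun p : Fin n × Fin n =>
            geMinus n σ col p.2 ∧ lePlus n σ col p.1 ∧ p.1 < p.2 ∧ σ p.2 < σ p.1).card
      + (univ.filter fun p : Fin n × Fin n =>
            geMinus n σ col p.2 ∧ geMinus n σ col p.1 ∧ p.1 < p.2).card
      + (univ.filter fun p : Fin n × Fin n =>
            geMinus n σ col p.2 ∧ lePlus n σ col p.1 ∧ σ p.1 < σ p.2).card := by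
  have hx : (univ.filter fun p : Fin n × Fin n =>
        geMinus n σ col p.2 ∧ lePlus n σ col p.1 ∧ p.1 < p.2 ∧ σ p.2 < σ p.1).card
      = ∑ a : Fin n, (univ.filter fun b : Fin n =>
            geMinus n σ col a ∧ lePlus n σ col b ∧ b < a ∧ σ a < σ b).card :=
    fiberSnd (fun b a => geMinus n σ col a ∧ lePlus n σ col b ∧ b < a ∧ σ a < σ b)
  have hg2 : (univ.filter fun p : Fin n × Fin n =>
        geMinus n σ col p.2 ∧ geMinus n σ col p.1 ∧ p.1 < p.2).card
      = ∑ a : Fin n, (univ.filter fun b : Fin n =>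
            geMinus n σ col a ∧ geMinus n σ col b ∧ b < a).card :=
    fiberSnd (fun b a => geMinus n σ col a ∧ geMinus n σ col b ∧ b < a)
  have hg3 : (univ.filter fun p : Fin n × Fin n =>
        geMinus n σ col p.2 ∧ lePlus n σ col p.1 ∧ σ p.1 < σ p.2).card
      = ∑ a : Fin n, (univ.filter fun b : Fin n =>
            geMinus n σ col a ∧ lePlus n σ col b ∧ σ b < σ a).card :=
    fiberSnd (fun b a => geMinus n σ col a ∧ lePlus n σ col b ∧ σ b < σ a)
  rw [hx, hg2, hg3, ← Finset.sum_add_distrib, ← Finset.sum_add_distrib,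
    Finset.sum_filter]
  refine Finset.sum_congr rfl fun a _ => ?_
  by_cases ha : geMinus n σ col a
  · simp only [ha, if_true, true_and]
    exact perA n σ col a ha
  · simp [ha]

lemma E2 :
    ∑ a ∈ univ.filter (geMinus n σ col), ((σ a : Fin n) : ℕ)
      = (univ.filter fun p : Fin n × Fin n =>
            geMinus n σ col p.2 ∧ lePlus n σ col p.1 ∧ σ p.1 < σ p.2).card
      + (univ.filter fun p : Fin n × Fin n =>
            geMinus n σ col p.2 ∧ geMinus n σ col p.1 ∧ σ p.1 < σ p.2).card := by
  have hg3 : (univ.filter fun p : Fin n × Fin n =>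
        geMinus n σ col p.2 ∧ lePlus n σ col p.1 ∧ σ p.1 < σ p.2).card
      = ∑ a : Fin n, (univ.filter fun b : Fin n =>
            geMinus n σ col a ∧ lePlus n σ col b ∧ σ b < σ a).card :=
    fiberSnd (fun b a => geMinus n σ col a ∧ lePlus n σ col b ∧ σ b < σ a)
  have hg2 : (univ.filter fun p : Fin n × Fin n =>
        geMinus n σ col p.2 ∧ geMinus n σ col p.1 ∧ σ p.1 < σ p.2).card
      = ∑ a : Fin n, (univ.filter fun b : Fin n =>
            geMinus n σ col a ∧ geMinus n σ col b ∧ σ b < σ a).card :=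
    fiberSnd (fun b a => geMinus n σ col a ∧ geMinus n σ col b ∧ σ b < σ a)
  rw [hg3, hg2, ← Finset.sum_add_distrib, Finset.sum_filter]
  refine Finset.sum_congr rfl fun a _ => ?_
  by_cases ha : geMinus n σ col a
  · simp only [ha, if_true, true_and]
    have h1 := perA2 n σ col a
    have e1 : (univ.filter fun b : Fin n => lePlus n σ col b ∧ σ b < σ a).card
        = (univ.filter fun b : Fin n => lePlus n σ col b ∧ σ b < σ a).card := rfl
    omega
  · simp [ha]

lemma E3 :
    (univ.filter fun p : Fin n × Fin n =>
        geMinus n σ col p.2 ∧ geMinus n σ col p.1 ∧ p.1 < p.2).card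
      = (univ.filter fun p : Fin n × Fin n =>
            geMinus n σ col p.2 ∧ geMinus n σ col p.1 ∧ σ p.1 < σ p.2).card := by
  have h1 : (univ.filter fun p : Fin n × Fin n =>
        geMinus n σ col p.2 ∧ geMinus n σ col p.1 ∧ p.1 < p.2).card
      = (univ.filter fun p : Fin n × Fin n =>
            (geMinus n σ col p.1 ∧ geMinus n σ col p.2) ∧ p.1 < p.2).card := by
    congr 1; apply Finset.filter_congr; intro p _; tauto
  have h2 : (univ.filter fun p : Fin n × Fin n =>
        geMinus n σ col p.2 ∧ geMinus n σ col p.1 ∧ σ p.1 < σ p.2).card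
      = (univ.filter fun p : Fin n × Fin n =>
            (geMinus n σ col p.1 ∧ geMinus n σ col p.2) ∧ σ p.1 < σ p.2).card := by
    congr 1; apply Finset.filter_congr; intro p _; tauto
  rw [h1, h2]
  exact sortbij σ (fun a b => geMinus n σ col a ∧ geMinus n σ col b)
    (fun a b h => ⟨h.2, h.1⟩)

lemma I_card :
    (univ.filter fun p : Fin n × Fin n => p.1 < p.2 ∧ p.2 ≤ σ p.1).card
      + ∑ b : Fin n, min ((σ b : Fin n) : ℕ) (b : ℕ)
      = ∑ b : Fin n, ((σ b : Fin n) : ℕ) := by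
  have h1 : (univ.filter fun p : Fin n × Fin n => p.1 < p.2 ∧ p.2 ≤ σ p.1).card
      = ∑ b : Fin n, (univ.filter fun t : Fin n => b < t ∧ t ≤ σ b).card :=
    fiberFst (fun b t => b < t ∧ t ≤ σ b)
  have h2 : ∀ b : Fin n, (univ.filter fun t : Fin n => b < t ∧ t ≤ σ b).card
      = ((σ b : Fin n) : ℕ) - (b : ℕ) := by
    intro b
    rw [show (univ.filter fun t : Fin n => b < t ∧ t ≤ σ b) = Finset.Ioc b (σ b) by
      ext t; simp [Finset.mem_Ioc]]
    simp [Fin.card_Ioc]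
  rw [h1]
  rw [Finset.sum_congr rfl fun b _ => h2 b, ← Finset.sum_add_distrib]
  refine Finset.sum_congr rfl fun b _ => ?_
  omega

lemma min_split :
    ∑ b : Fin n, min ((σ b : Fin n) : ℕ) (b : ℕ)
      = (∑ b ∈ univ.filter (lePlus n σ col), (b : ℕ))
      + ∑ a ∈ univ.filter (geMinus n σ col), ((σ a : Fin n) : ℕ) := by
  rw [← Finset.sum_filter_add_sum_filter_not univ (lePlus n σ col)
    (fun b => min ((σ b : Fin n) : ℕ) (b : ℕ))]
  congr 1
  · refine Finset.sum_congr rfl fun b hb => ?_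
    simp only [mem_filter, mem_univ, true_and] at hb
    exact min_eq_right (lp_le b hb)
  · rw [show (univ.filter fun b => ¬ lePlus n σ col b) = univ.filter (geMinus n σ col) by
      apply Finset.filter_congr; intro b _; exact (gm_iff b).symm]
    refine Finset.sum_congr rfl fun a ha => ?_
    simp only [mem_filter, mem_univ, true_and] at ha
    exact min_eq_left (gm_le a ha)

lemma E4 : ∑ b : Fin n, ((σ b : Fin n) : ℕ) = ∑ b : Fin n, (b : ℕ) :=
  Equiv.sum_comp σ (fun i : Fin n => (i : ℕ))

lemma E5 : ∑ b : Fin n, (b : ℕ)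
    = (∑ b ∈ univ.filter (lePlus n σ col), (b : ℕ))
      + ∑ a ∈ univ.filter (geMinus n σ col), (a : ℕ) := by
  rw [← Finset.sum_filter_add_sum_filter_not univ (lePlus n σ col) (fun b : Fin n => (b : ℕ))]
  congr 1
  apply Finset.sum_congr
  · apply Finset.filter_congr; intro b _; exact (gm_iff b).symm
  · intros; rfl

end Main2

section Main3

variable (n : ℕ) (σ : Equiv.Perm (Fin n)) (col : Fin n → Bool)

lemma X_swap :
    (univ.filter fun p : Fin n × Fin n =>
        geMinus n σ col p.1 ∧ lePlus n σ col p.2 ∧ p.2 < p.1 ∧ σ p.1 < σ p.2).card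
      = (univ.filter fun p : Fin n × Fin n =>
            geMinus n σ col p.2 ∧ lePlus n σ col p.1 ∧ p.1 < p.2 ∧ σ p.2 < σ p.1).card :=
  cswap (fun a b : Fin n => geMinus n σ col a ∧ lePlus n σ col b ∧ b < a ∧ σ a < σ b)

lemma NW_split :
    (univ.filter fun p : Fin n × Fin n =>
        geMinus n σ col p.1 ∧ lePlus n σ col p.2).card
      = (univ.filter fun p : Fin n × Fin n =>
            geMinus n σ col p.1 ∧ σ p.2 < σ p.1 ∧ lePlus n σ col p.2).card
      + (univ.filter fun p : Fin n × Fin n =>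
            lePlus n σ col p.2 ∧ p.1 < p.2 ∧ geMinus n σ col p.1).card
      + (univ.filter fun p : Fin n × Fin n =>
            geMinus n σ col p.1 ∧ lePlus n σ col p.2 ∧ p.2 < p.1 ∧ σ p.1 < σ p.2).card := by
  have h1 := csplit (fun p : Fin n × Fin n =>
      geMinus n σ col p.1 ∧ lePlus n σ col p.2) (fun p => σ p.2 < σ p.1)
  have h2 := csplit (fun p : Fin n × Fin n =>
      (geMinus n σ col p.1 ∧ lePlus n σ col p.2) ∧ ¬ σ p.2 < σ p.1)
    (fun p => p.1 < p.2)
  have e1 : (univ.filter fun p : Fin n × Fin n =>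
        (geMinus n σ col p.1 ∧ lePlus n σ col p.2) ∧ σ p.2 < σ p.1).card
      = (univ.filter fun p : Fin n × Fin n =>
            geMinus n σ col p.1 ∧ σ p.2 < σ p.1 ∧ lePlus n σ col p.2).card := by
    congr 1; apply Finset.filter_congr; intro p _; tauto
  have e2 : (univ.filter fun p : Fin n × Fin n =>
        ((geMinus n σ col p.1 ∧ lePlus n σ col p.2) ∧ ¬ σ p.2 < σ p.1) ∧ p.1 < p.2).card
      = (univ.filter fun p : Fin n × Fin n =>
            lePlus n σ col p.2 ∧ p.1 < p.2 ∧ geMinus n σ col p.1).card := by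
    congr 1; apply Finset.filter_congr; intro p _
    constructor
    · rintro ⟨⟨⟨hG, hL⟩, _⟩, hlt⟩
      exact ⟨hL, hlt, hG⟩
    · rintro ⟨hL, hlt, hG⟩
      exact ⟨⟨⟨hG, hL⟩, not_lt.mpr (le_trans (le_trans (gm_le p.1 hG) hlt.le)
        (lp_le p.2 hL))⟩, hlt⟩
  have e3 : (univ.filter fun p : Fin n × Fin n =>
        ((geMinus n σ col p.1 ∧ lePlus n σ col p.2) ∧ ¬ σ p.2 < σ p.1) ∧ ¬ p.1 < p.2).card
      = (univ.filter fun p : Fin n × Fin n =>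
            geMinus n σ col p.1 ∧ lePlus n σ col p.2 ∧ p.2 < p.1 ∧ σ p.1 < σ p.2).card := by
    congr 1; apply Finset.filter_congr; intro p _
    constructor
    · rintro ⟨⟨⟨hG, hL⟩, hn1⟩, hn2⟩
      have hne : p.2 ≠ p.1 := by
        intro h
        exact (gm_iff p.1).mp hG (h ▸ hL)
      have hσne : σ p.1 ≠ σ p.2 := fun h => hne (σ.injective h).symm
      exact ⟨hG, hL, lt_of_le_of_ne (not_lt.mp hn2) hne,
        lt_of_le_of_ne (not_lt.mp hn1) hσne⟩
    · rintro ⟨hG, hL, hlt, hσ⟩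
      exact ⟨⟨⟨hG, hL⟩, lt_asymm hσ⟩, lt_asymm hlt⟩
  omega

lemma NW_card (k : ℕ)
    (hk : (univ.filter fun i : Fin n => lePlus n σ col i).card = k) :
    (univ.filter fun p : Fin n × Fin n =>
        geMinus n σ col p.1 ∧ lePlus n σ col p.2).card = (n - k) * k := by
  have hprod : (univ.filter fun p : Fin n × Fin n =>
        geMinus n σ col p.1 ∧ lePlus n σ col p.2)
      = (univ.filter (geMinus n σ col)) ×ˢ (univ.filter (lePlus n σ col)) := by
    ext p
    simp only [mem_filter, mem_univ, true_and, Finset.mem_product]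
  have hG : (univ.filter (geMinus n σ col)).card = n - k := by
    have h := Finset.card_filter_add_card_filter_not (s := (univ : Finset (Fin n)))
      (p := fun i : Fin n => lePlus n σ col i)
    have h4 : (univ.filter fun i : Fin n => lePlus n σ col i).card = k := hk
    have h2 : (univ.filter fun i : Fin n => ¬ lePlus n σ col i)
        = univ.filter (geMinus n σ col) := by
      apply Finset.filter_congr; intro i _; exact (gm_iff i).symm
    rw [h2] at h
    have h3 : (univ : Finset (Fin n)).card = n := by simp
    omega
  rw [hprod, Finset.card_product, hG, hk]

end Main3

/-- For any decorated permutation of [n] with k weak exceedances,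
A₊(σ) + A₋(σ) + C₊(σ) + C₋(σ) + A₊₋(σ) + |{j : j > σ(j)}| = (n−k)k.
Pairs p = (i, j). -/
theorem stmt15 (n k : ℕ) (σ : Equiv.Perm (Fin n)) (col : Fin n → Bool)
    (hk : (univ.filter fun i : Fin n => lePlus n σ col i).card = k) :
    -- A₊(σ) : j < i ≤₊ σ(i) < σ(j)
    (univ.filter fun p : Fin n × Fin n =>
        p.2 < p.1 ∧ lePlus n σ col p.1 ∧ σ p.1 < σ p.2).card +
    -- A₋(σ) : j > i ≥₋ σ(i) > σ(j)
    (univ.filter fun p : Fin n × Fin n =>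
        p.1 < p.2 ∧ geMinus n σ col p.1 ∧ σ p.2 < σ p.1).card +
    -- C₊(σ) : i < j ≤ σ(i) < σ(j)
    (univ.filter fun p : Fin n × Fin n =>
        p.1 < p.2 ∧ p.2 ≤ σ p.1 ∧ σ p.1 < σ p.2).card +
    -- C₋(σ) : j > i > σ(j) > σ(i)
    (univ.filter fun p : Fin n × Fin n =>
        p.1 < p.2 ∧ σ p.2 < p.1 ∧ σ p.1 < σ p.2).card +
    -- A₊₋(σ) : {(i,j) : i ≥₋ σ(i) > σ(j), j ≤₊ σ(j)} ∪ {(i,j) : j ≤₊ σ(j), j > i ≥₋ σ(i)}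
    ((univ.filter fun p : Fin n × Fin n =>
        geMinus n σ col p.1 ∧ σ p.2 < σ p.1 ∧ lePlus n σ col p.2).card +
      (univ.filter fun p : Fin n × Fin n =>
        lePlus n σ col p.2 ∧ p.1 < p.2 ∧ geMinus n σ col p.1).card) +
    -- strict descedances
    (univ.filter fun j : Fin n => σ j < j).card =
    (n - k) * k := by
  have hI := I_split n σ col
  have hM := M_balance n σ col
  have hM' := M'_split n σ col
  have hNN := NN_split n σ col
  have hE1 := E1 n σ col
  have hE2 := E2 n σ col
  have hE3 := E3 n σ col
  have hIc := I_card n σ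
  have hmin := min_split n σ col
  have hE4 := E4 n σ
  have hE5 := E5 n σ col
  have hXsw := X_swap n σ col
  have hNW := NW_split n σ col
  have hNWc := NW_card n σ col k hk
  have key : (univ.filter fun p : Fin n × Fin n =>
        p.2 < p.1 ∧ lePlus n σ col p.1 ∧ σ p.1 < σ p.2).card +
    (univ.filter fun p : Fin n × Fin n =>
        p.1 < p.2 ∧ geMinus n σ col p.1 ∧ σ p.2 < σ p.1).card +
    (univ.filter fun p : Fin n × Fin n =>
        p.1 < p.2 ∧ p.2 ≤ σ p.1 ∧ σ p.1 < σ p.2).card +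
    (univ.filter fun p : Fin n × Fin n =>
        p.1 < p.2 ∧ σ p.2 < p.1 ∧ σ p.1 < σ p.2).card +
    ((univ.filter fun p : Fin n × Fin n =>
        geMinus n σ col p.1 ∧ σ p.2 < σ p.1 ∧ lePlus n σ col p.2).card +
      (univ.filter fun p : Fin n × Fin n =>
        lePlus n σ col p.2 ∧ p.1 < p.2 ∧ geMinus n σ col p.1).card) +
    (univ.filter fun j : Fin n => σ j < j).card
    = (univ.filter fun p : Fin n × Fin n =>
        geMinus n σ col p.1 ∧ lePlus n σ col p.2).card := by
    omega
  rw [key, hNWc]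
end

section
/- For any permutation σ of [n], the word c = (c₁,...,c_n) defined by cᵢ = N if i < σ(i) and i < σ⁻¹(i), cᵢ = E if i < σ(i) and i > σ⁻¹(i), cᵢ = Ē if i > σ(i) and i < σ⁻¹(i), cᵢ = S if i > σ(i) and i > σ⁻¹(i), and cᵢ = E if i = σ(i), is a bicolored Motzkin path: its running height h_i = |{j < i : c_j = N}| − |{j < i : c_j = S}| is nonnegative for all i and h_{n+1} = 0; moreover h_i = |{j < i : σ(j) ≥ i}|. -/
open Finset

/-- Steps of a bicolored Motzkin path. -/
inductive MStep
  | N | S | E | Eb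
  deriving DecidableEq

/-- The Foata–Zeilberger step of σ at i: N if i < σ(i), i < σ⁻¹(i); E if
i < σ(i), i > σ⁻¹(i); Ē if i > σ(i), i < σ⁻¹(i); S if i > σ(i), i > σ⁻¹(i);
fixed points i = σ(i) get E. -/
def stepOf {n : ℕ} (σ : Equiv.Perm (Fin n)) (i : Fin n) : MStep :=
  if σ i = i then MStep.E
  else if i < σ i then (if i < σ.symm i then MStep.N else MStep.E)
  else (if i < σ.symm i then MStep.Eb else MStep.S)

lemma fz_key {n : ℕ} (σ : Equiv.Perm (Fin n)) (t : ℕ) :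
    (univ.filter fun j : Fin n => j.val < t ∧ stepOf σ j = MStep.S).card +
      (univ.filter fun j : Fin n => j.val < t ∧ t ≤ (σ j).val).card =
      (univ.filter fun j : Fin n => j.val < t ∧ stepOf σ j = MStep.N).card := by
  classical
  simp only [Finset.card_filter]
  -- M and V auxiliary indicator sums
  have hMV : ∑ j : Fin n, (if j.val < t ∧ j.val < (σ j).val ∧ (σ j).val < t then (1:ℕ) else 0)
      = ∑ j : Fin n, (if j.val < t ∧ (σ.symm j).val < j.val then (1:ℕ) else 0) := by
    rw [← Equiv.sum_comp σ (fun j : Fin n => if j.val < t ∧ (σ.symm j).val < j.val then (1:ℕ) else 0)]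
    refine Finset.sum_congr rfl fun j _ => ?_
    simp only [Equiv.symm_apply_apply]
    congr 1
    rw [eq_iff_iff]
    omega
  have point : ∀ j : Fin n,
      ((if j.val < t ∧ stepOf σ j = MStep.S then (1:ℕ) else 0) +
        (if j.val < t ∧ t ≤ (σ j).val then (1:ℕ) else 0)) +
      (if j.val < t ∧ j.val < (σ j).val ∧ (σ j).val < t then (1:ℕ) else 0) =
      (if j.val < t ∧ stepOf σ j = MStep.N then (1:ℕ) else 0) +
      (if j.val < t ∧ (σ.symm j).val < j.val then (1:ℕ) else 0) := by
    intro j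
    have h0 : σ.symm j = j ↔ σ j = j := by
      rw [Equiv.symm_apply_eq]; exact eq_comm
    rcases Nat.lt_trichotomy (σ j).val j.val with h1 | h1 | h1
    · -- σ j < j
      have hne : ¬ (σ j = j) := by rw [Fin.ext_iff]; omega
      have hne2 : (σ.symm j).val ≠ j.val := by
        intro hc
        exact hne (h0.mp (Fin.ext hc))
      rcases Nat.lt_trichotomy (σ.symm j).val j.val with h2 | h2 | h2
      · have hs : stepOf σ j = MStep.S := by
          unfold stepOf
          rw [if_neg hne, if_neg (by rw [Fin.lt_def]; omega),
            if_neg (by rw [Fin.lt_def]; omega)]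
        simp only [hs]
        simp only [Fin.lt_def, reduceCtorEq, and_false, if_false, eq_self_iff_true, and_true]
        split_ifs <;> omega
      · exact absurd h2 hne2
      · have hs : stepOf σ j = MStep.Eb := by
          unfold stepOf
          rw [if_neg hne, if_neg (by rw [Fin.lt_def]; omega),
            if_pos (by rw [Fin.lt_def]; omega)]
        simp only [hs]
        simp only [Fin.lt_def, reduceCtorEq, and_false, if_false, eq_self_iff_true, and_true]
        split_ifs <;> omega
    · -- σ j = j
      have hfix : σ j = j := Fin.ext h1
      have hsym : σ.symm j = j := h0.mpr hfix
      have hs : stepOf σ j = MStep.E := by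
        unfold stepOf
        rw [if_pos hfix]
      have hv2 : (σ.symm j).val = j.val := by rw [hsym]
      simp only [hs]
      simp only [Fin.lt_def, reduceCtorEq, and_false, if_false, eq_self_iff_true, and_true]
      split_ifs <;> omega
    · -- j < σ j
      have hne : ¬ (σ j = j) := by rw [Fin.ext_iff]; omega
      have hne2 : (σ.symm j).val ≠ j.val := by
        intro hc
        exact hne (h0.mp (Fin.ext hc))
      rcases Nat.lt_trichotomy (σ.symm j).val j.val with h2 | h2 | h2
      · have hs : stepOf σ j = MStep.E := by
          unfold stepOf
          rw [if_neg hne, if_pos (by rw [Fin.lt_def]; omega),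
            if_neg (by rw [Fin.lt_def]; omega)]
        simp only [hs]
        simp only [Fin.lt_def, reduceCtorEq, and_false, if_false, eq_self_iff_true, and_true]
        split_ifs <;> omega
      · exact absurd h2 hne2
      · have hs : stepOf σ j = MStep.N := by
          unfold stepOf
          rw [if_neg hne, if_pos (by rw [Fin.lt_def]; omega),
            if_pos (by rw [Fin.lt_def]; omega)]
        simp only [hs]
        simp only [Fin.lt_def, reduceCtorEq, and_false, if_false, eq_self_iff_true, and_true]
        split_ifs <;> omega
  calc (∑ j : Fin n, if j.val < t ∧ stepOf σ j = MStep.S then (1:ℕ) else 0) +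
        (∑ j : Fin n, if j.val < t ∧ t ≤ (σ j).val then (1:ℕ) else 0)
      = (∑ j : Fin n, (((if j.val < t ∧ stepOf σ j = MStep.S then (1:ℕ) else 0) +
          (if j.val < t ∧ t ≤ (σ j).val then (1:ℕ) else 0)) +
          (if j.val < t ∧ j.val < (σ j).val ∧ (σ j).val < t then (1:ℕ) else 0))) -
        (∑ j : Fin n, (if j.val < t ∧ j.val < (σ j).val ∧ (σ j).val < t then (1:ℕ) else 0)) := by
        rw [Finset.sum_add_distrib, Finset.sum_add_distrib]; omega
    _ = (∑ j : Fin n, ((if j.val < t ∧ stepOf σ j = MStep.N then (1:ℕ) else 0) +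
          (if j.val < t ∧ (σ.symm j).val < j.val then (1:ℕ) else 0))) -
        (∑ j : Fin n, (if j.val < t ∧ (σ.symm j).val < j.val then (1:ℕ) else 0)) := by
        rw [hMV]; congr 1; exact Finset.sum_congr rfl fun j _ => point j
    _ = ∑ j : Fin n, if j.val < t ∧ stepOf σ j = MStep.N then (1:ℕ) else 0 := by
        rw [Finset.sum_add_distrib]; omega

/-- The Foata–Zeilberger word of any permutation σ of [n] is a bicolored
Motzkin path: for every prefix length t ≤ n the number of S steps in the
prefix is at most the number of N steps (height nonnegative), the height of
the prefix equals |{j < t : σ(j) ≥ t}| (which for t = n forces the final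
height to be 0, i.e. h_{n+1} = 0). Here positions are 0-indexed, so prefix
length t corresponds to the 1-indexed height h_{t+1}. -/
theorem stmt18 (n : ℕ) (σ : Equiv.Perm (Fin n)) :
    (∀ t : ℕ, t ≤ n →
      (univ.filter fun j : Fin n => j.val < t ∧ stepOf σ j = MStep.S).card ≤
        (univ.filter fun j : Fin n => j.val < t ∧ stepOf σ j = MStep.N).card ∧
      (univ.filter fun j : Fin n => j.val < t ∧ stepOf σ j = MStep.N).card -
        (univ.filter fun j : Fin n => j.val < t ∧ stepOf σ j = MStep.S).card =
        (univ.filter fun j : Fin n => j.val < t ∧ t ≤ (σ j).val).card) ∧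
    (univ.filter fun j : Fin n => stepOf σ j = MStep.N).card =
      (univ.filter fun j : Fin n => stepOf σ j = MStep.S).card := by
  constructor
  · intro t ht
    have h := fz_key σ t
    omega
  · have h := fz_key σ n
    have hA : (univ.filter fun j : Fin n => j.val < n ∧ n ≤ (σ j).val).card = 0 := by
      rw [Finset.card_eq_zero, Finset.filter_eq_empty_iff]
      intro j _
      exact fun hc => absurd hc.2 (by omega)
    have e1 : (univ.filter fun j : Fin n => stepOf σ j = MStep.N) =
        (univ.filter fun j : Fin n => j.val < n ∧ stepOf σ j = MStep.N) := by
      apply Finset.filter_congr; intro j _; simp [j.isLt]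
    have e2 : (univ.filter fun j : Fin n => stepOf σ j = MStep.S) =
        (univ.filter fun j : Fin n => j.val < n ∧ stepOf σ j = MStep.S) := by
      apply Finset.filter_congr; intro j _; simp [j.isLt]
    rw [e1, e2]; omega
end
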